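/- Let Q and Q̄ be n×n real symmetric matrices with ‖Q‖₂ ≤ 1 and ‖Q̄‖₂ ≤ 1, let α ∈ (0,1), let d₁,…,d_n > 0 and w₁,…,w_n > 0 with D = diag(d), W = diag(w), w_max = max_i w_i, w_min = min_i w_i, and let v ∈ ℝⁿ. Suppose ‖Q − Q̄‖₂ ≤ t, max_i |√(d_i/w_i) − 1| ≤ δ and max_i |√(w_i/d_i) − 1| ≤ δ for some t, δ ≥ 0. Then ‖ (1−α) D^{1/2}(I − αQ)^{-1}D^{-1/2} v − (1−α) W^{1/2}(I − αQ̄)^{-1}W^{-1/2} v ‖₁ ≤ √n · ‖v‖₂ · √(w_max/w_min) · ( t/(1−α) + 2δ + δ² ). (When Q = D^{-1/2}AD^{-1/2} for the adjacency matrix A of a graph with degree matrix D, and Q̄ = W^{-1/2}ĀW^{-1/2} with Ā = E[A] and W = E[D], the left-hand side is the ℓ¹ distance between the PageRank vector π = (1−α)(I−αAD^{-1})^{-1}v and the averaged PageRank π̄_SBM = (1−α)(I−αĀW^{-1})^{-1}v of Theorem 4 for the Stochastic Block Model.) -/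

import Mathlib

/-!
Write `D^{1/2} = W^{1/2} E` and `D^{-1/2} = E' W^{-1/2}` with `E = diag √(d/w)` and
`E' = diag √(w/d)`, both within `δ` of the identity in spectral norm. With `R, R̄` the two
resolvents, the difference of the two PageRank operators is `(1 - α) W^{1/2} X W^{-1/2}` where
`X = (E - 1) R E' + R (E' - 1) + (R - R̄)`. The Neumann series gives `‖R‖, ‖R̄‖ ≤ (1 - α)⁻¹`, and
the resolvent identity `R - R̄ = R (α (Q - Q̄)) R̄` gives `‖R - R̄‖ ≤ α t / (1 - α)²`; hence
`(1 - α) ‖X‖ ≤ t / (1 - α) + 2δ + δ²`. The conjugation by `W^{1/2}` costs `√(w_max / w_min)`, and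
Cauchy–Schwarz passes from the spectral bound to the `ℓ¹` norm at the cost of `√n`.
-/

open Matrix Finset

/-- Spectral norm of a matrix: the operator norm induced by the Euclidean vector norm. -/
noncomputable def sNorm {n : ℕ} (M : Matrix (Fin n) (Fin n) ℝ) : ℝ :=
  ‖Matrix.toEuclideanCLM (𝕜 := ℝ) M‖

/-- Euclidean norm of a vector. -/
noncomputable def vNorm2 {n : ℕ} (x : Fin n → ℝ) : ℝ :=
  Real.sqrt (∑ i, (x i) ^ 2)

open scoped Matrix.Norms.L2Operator Ring

section Ring

variable {A : Type*} [Ring A]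

theorem conj_sub_conj_eq (S E R E' S' R' : A) :
    S * E * R * (E' * S') - S * R' * S' =
      S * ((E - 1) * R * E' + R * (E' - 1) + (R - R')) * S' := by
  noncomm_ring

end Ring

theorem norm_smul_lt_one {E : Type*} [SeminormedAddCommGroup E] [NormedSpace ℝ E] {x : E}
    {α : ℝ} (hx : ‖x‖ ≤ 1) (h0 : 0 ≤ α) (h1 : α < 1) : ‖α • x‖ < 1 := by
  rw [norm_smul, Real.norm_of_nonneg h0]
  exact (mul_le_of_le_one_right h0 hx).trans_lt h1

section NormedRing

variable {A : Type*} [NormedRing A] [NormOneClass A]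

theorem norm_conj_sub_conj_le (S E R E' S' R' : A) {δ r : ℝ}
    (hE : ‖E - 1‖ ≤ δ) (hE' : ‖E' - 1‖ ≤ δ) (hR : ‖R‖ ≤ r) :
    ‖S * E * R * (E' * S') - S * R' * S'‖ ≤
      ‖S‖ * (δ * r * (1 + δ) + r * δ + ‖R - R'‖) * ‖S'‖ := by
  have hδ : 0 ≤ δ := (norm_nonneg _).trans hE
  have hr : 0 ≤ r := (norm_nonneg _).trans hR
  have hE'_le : ‖E'‖ ≤ 1 + δ := by
    simpa only [norm_one] using (norm_le_norm_add_norm_sub' E' 1).trans (add_le_add_right hE' _)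
  rw [conj_sub_conj_eq]
  have hmid : ‖(E - 1) * R * E' + R * (E' - 1) + (R - R')‖ ≤
      δ * r * (1 + δ) + r * δ + ‖R - R'‖ :=
    calc _ ≤ ‖(E - 1) * R * E'‖ + ‖R * (E' - 1)‖ + ‖R - R'‖ := norm_add₃_le
      _ ≤ _ := by
        gcongr
        · exact norm_mul₃_le.trans (by gcongr)
        · exact (norm_mul_le _ _).trans (by gcongr)
  exact norm_mul₃_le.trans (by gcongr)

variable [HasSummableGeomSeries A]

theorem norm_inverse_one_sub_le {x : A} (h : ‖x‖ < 1) : ‖(1 - x)⁻¹ʳ‖ ≤ (1 - ‖x‖)⁻¹ := by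
  simpa only [geom_series_eq_inverse x h, norm_one, sub_self, zero_add] using
    tsum_geometric_le_of_norm_lt_one x h

variable [NormedAlgebra ℝ A] {x y : A} {α : ℝ}

theorem norm_inverse_one_sub_smul_le (hx : ‖x‖ ≤ 1) (h0 : 0 ≤ α) (h1 : α < 1) :
    ‖(1 - α • x)⁻¹ʳ‖ ≤ (1 - α)⁻¹ := by
  refine (norm_inverse_one_sub_le (norm_smul_lt_one hx h0 h1)).trans ?_
  have hαx : ‖α • x‖ ≤ α := by
    rw [norm_smul, Real.norm_of_nonneg h0]
    exact mul_le_of_le_one_right h0 hx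
  gcongr

theorem norm_inverse_one_sub_smul_sub_le (hx : ‖x‖ ≤ 1) (hy : ‖y‖ ≤ 1) (h0 : 0 ≤ α)
    (h1 : α < 1) :
    ‖(1 - α • x)⁻¹ʳ - (1 - α • y)⁻¹ʳ‖ ≤ α * ‖x - y‖ / (1 - α) ^ 2 := by
  have hunit (z : A) (hz : ‖z‖ ≤ 1) : IsUnit (1 - α • z) :=
    isUnit_one_sub_of_norm_lt_one (norm_smul_lt_one hz h0 h1)
  have hdiff : (1 - α • y) - (1 - α • x) = α • (x - y) := by rw [smul_sub]; abel
  rw [Ring.inverse_sub_inverse (iff_of_true (hunit x hx) (hunit y hy)), hdiff]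
  calc _ ≤ ‖(1 - α • x)⁻¹ʳ‖ * ‖α • (x - y)‖ * ‖(1 - α • y)⁻¹ʳ‖ := norm_mul₃_le
    _ ≤ (1 - α)⁻¹ * (α * ‖x - y‖) * (1 - α)⁻¹ := by
      rw [norm_smul, Real.norm_of_nonneg h0]
      gcongr
      · exact norm_inverse_one_sub_smul_le hx h0 h1
      · exact norm_inverse_one_sub_smul_le hy h0 h1
    _ = _ := by field_simp

theorem norm_smul_conj_resolvent_sub_le {S E E' S' : A} {κ δ t : ℝ} (hS : ‖S‖ * ‖S'‖ ≤ κ)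
    (hE : ‖E - 1‖ ≤ δ) (hE' : ‖E' - 1‖ ≤ δ) (hx : ‖x‖ ≤ 1) (hy : ‖y‖ ≤ 1)
    (hxy : ‖x - y‖ ≤ t) (h0 : 0 ≤ α) (h1 : α < 1) :
    ‖(1 - α) • (S * E * (1 - α • x)⁻¹ʳ * (E' * S') - S * (1 - α • y)⁻¹ʳ * S')‖ ≤
      κ * (t / (1 - α) + 2 * δ + δ ^ 2) := by
  have h1α : 0 < 1 - α := by linarith
  have hδ : 0 ≤ δ := (norm_nonneg _).trans hE
  have ht : 0 ≤ t := (norm_nonneg _).trans hxy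
  have hκ : 0 ≤ κ := (mul_nonneg (norm_nonneg S) (norm_nonneg S')).trans hS
  have hbound := norm_conj_sub_conj_le S E _ E' S' (1 - α • y)⁻¹ʳ hE hE'
    (norm_inverse_one_sub_smul_le hx h0 h1)
  have hres := norm_inverse_one_sub_smul_sub_le hx hy h0 h1
  rw [norm_smul, Real.norm_of_nonneg h1α.le]
  calc _ ≤ (1 - α) * (‖S‖ * (δ * (1 - α)⁻¹ * (1 + δ) + (1 - α)⁻¹ * δ
          + α * t / (1 - α) ^ 2) * ‖S'‖) := by
        gcongr
        exact hbound.trans (by gcongr; exact hres.trans (by gcongr))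
    _ = ‖S‖ * ‖S'‖ * (α * t / (1 - α) + 2 * δ + δ ^ 2) := by field_simp; ring
    _ ≤ _ := by
      gcongr ?_ * (?_ / _ + _ + _)
      exact mul_le_of_le_one_left ht h1.le

end NormedRing

section Matrix

variable {ι : Type*} [Fintype ι] [DecidableEq ι]

theorem l2_opNorm_diagonal_le {𝕜 : Type*} [RCLike 𝕜] [Nonempty ι] {f : ι → 𝕜} {c : ℝ}
    (h : ∀ i, ‖f i‖ ≤ c) : ‖diagonal f‖ ≤ c := by
  rw [l2_opNorm_diagonal]
  exact (pi_norm_le_iff_of_nonempty f).2 h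

theorem l2_opNorm_diagonal_sub_one_le {𝕜 : Type*} [RCLike 𝕜] [Nonempty ι] {f : ι → 𝕜} {c : ℝ}
    (h : ∀ i, ‖f i - 1‖ ≤ c) : ‖diagonal f - 1‖ ≤ c := by
  rw [← diagonal_one, diagonal_sub]
  exact l2_opNorm_diagonal_le h

variable {w : ι → ℝ}

theorem diagonal_sqrt_eq_mul (d : ι → ℝ) (hw : ∀ i, 0 < w i) :
    diagonal (fun i => √(d i)) =
      diagonal (fun i => √(w i)) * diagonal (fun i => √(d i / w i)) := by
  rw [diagonal_mul_diagonal]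
  congr 1
  ext i
  rw [Real.sqrt_div' _ (hw i).le, mul_div_cancel₀ _ (Real.sqrt_pos.2 (hw i)).ne']

theorem diagonal_inv_sqrt_eq_mul (d : ι → ℝ) (hw : ∀ i, 0 < w i) :
    diagonal (fun i => (√(d i))⁻¹) =
      diagonal (fun i => √(w i / d i)) * diagonal (fun i => (√(w i))⁻¹) := by
  rw [diagonal_mul_diagonal]
  congr 1
  ext i
  rw [Real.sqrt_div (hw i).le, div_mul_eq_mul_div, mul_inv_cancel₀ (Real.sqrt_pos.2 (hw i)).ne',
    one_div]

theorem l2_opNorm_diagonal_sqrt_mul_le [Nonempty ι] (hw : ∀ i, 0 < w i) :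
    ‖diagonal (fun i => √(w i))‖ * ‖diagonal (fun i => (√(w i))⁻¹)‖ ≤
      √(univ.sup' univ_nonempty w / univ.inf' univ_nonempty w) := by
  obtain ⟨j, -, hj⟩ := exists_mem_eq_inf' univ_nonempty w
  have hmin : 0 < univ.inf' univ_nonempty w := hj ▸ hw j
  rw [Real.sqrt_div' _ hmin.le, div_eq_mul_inv]
  gcongr
  · exact l2_opNorm_diagonal_le fun i => by
      rw [Real.norm_of_nonneg (Real.sqrt_nonneg _)]
      exact Real.sqrt_le_sqrt (le_sup' w (mem_univ i))
  · exact l2_opNorm_diagonal_le fun i => by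
      rw [Real.norm_of_nonneg (by positivity)]
      exact inv_anti₀ (Real.sqrt_pos.2 hmin) (Real.sqrt_le_sqrt (inf'_le w (mem_univ i)))

end Matrix

theorem sNorm_eq_l2_opNorm {n : ℕ} (M : Matrix (Fin n) (Fin n) ℝ) : sNorm M = ‖M‖ := rfl

theorem vNorm2_eq_norm {n : ℕ} (x : Fin n → ℝ) : vNorm2 x = ‖WithLp.toLp 2 x‖ := by
  simp [vNorm2, EuclideanSpace.norm_eq, Real.norm_eq_abs, sq_abs]

theorem vNorm2_mulVec_le {n : ℕ} (M : Matrix (Fin n) (Fin n) ℝ) (x : Fin n → ℝ) :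
    vNorm2 (M *ᵥ x) ≤ ‖M‖ * vNorm2 x := by
  rw [vNorm2_eq_norm, vNorm2_eq_norm]
  exact l2_opNorm_mulVec M (WithLp.toLp 2 x)

theorem sum_abs_le_sqrt_mul_vNorm2 {n : ℕ} (x : Fin n → ℝ) :
    ∑ i, |x i| ≤ √n * vNorm2 x := by
  have hcs : (∑ i, |x i|) ^ 2 ≤ n * ∑ i, x i ^ 2 := by
    simpa only [sq_abs, card_univ, Fintype.card_fin] using
      sq_sum_le_card_mul_sum_sq (s := univ) (f := fun i => |x i|)
  rw [vNorm2, ← Real.sqrt_mul n.cast_nonneg]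
  exact Real.le_sqrt_of_sq_le hcs

theorem sum_abs_mulVec_le {n : ℕ} (M : Matrix (Fin n) (Fin n) ℝ) (v : Fin n → ℝ) :
    ∑ i, |(M *ᵥ v) i| ≤ √n * vNorm2 v * ‖M‖ :=
  calc _ ≤ √n * vNorm2 (M *ᵥ v) := sum_abs_le_sqrt_mul_vNorm2 _
    _ ≤ √n * (‖M‖ * vNorm2 v) := by gcongr; exact vNorm2_mulVec_le M v
    _ = _ := by ring

theorem pagerank_sbm_l1_error_bound_general
    (n : ℕ) [NeZero n]
    (Q Qbar : Matrix (Fin n) (Fin n) ℝ)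
    (hQ1 : sNorm Q ≤ 1) (hQbar1 : sNorm Qbar ≤ 1)
    (α : ℝ) (hα : α ∈ Set.Ioo (0 : ℝ) 1)
    (d w : Fin n → ℝ) (hw : ∀ i, 0 < w i)
    (v : Fin n → ℝ)
    (t δ : ℝ)
    (hQQbar : sNorm (Q - Qbar) ≤ t)
    (hδ₁ : ∀ i, |Real.sqrt (d i / w i) - 1| ≤ δ)
    (hδ₂ : ∀ i, |Real.sqrt (w i / d i) - 1| ≤ δ) :
    ∑ i, |((1 - α) • ((Matrix.diagonal (fun i => Real.sqrt (d i)) * (1 - α • Q)⁻¹ *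
            Matrix.diagonal (fun i => (Real.sqrt (d i))⁻¹)) *ᵥ v) -
          (1 - α) • ((Matrix.diagonal (fun i => Real.sqrt (w i)) * (1 - α • Qbar)⁻¹ *
            Matrix.diagonal (fun i => (Real.sqrt (w i))⁻¹)) *ᵥ v)) i| ≤
      Real.sqrt n * vNorm2 v *
        Real.sqrt (univ.sup' univ_nonempty w / univ.inf' univ_nonempty w) *
        (t / (1 - α) + 2 * δ + δ ^ 2) := by
  rw [sNorm_eq_l2_opNorm] at hQ1 hQbar1 hQQbar
  rw [diagonal_sqrt_eq_mul d hw, diagonal_inv_sqrt_eq_mul d hw, nonsing_inv_eq_ringInverse,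
    nonsing_inv_eq_ringInverse, ← smul_sub, ← sub_mulVec, ← smul_mulVec]
  refine (sum_abs_mulVec_le _ v).trans ?_
  rw [mul_assoc (√n * vNorm2 v)]
  gcongr
  · exact mul_nonneg (Real.sqrt_nonneg _) (Real.sqrt_nonneg _)
  exact norm_smul_conj_resolvent_sub_le (l2_opNorm_diagonal_sqrt_mul_le hw)
    (l2_opNorm_diagonal_sub_one_le hδ₁) (l2_opNorm_diagonal_sub_one_le hδ₂) hQ1 hQbar1 hQQbar
    hα.1.le hα.2

/-- for symmetric `Q, Q̄` of spectral norm at most one, `α ∈ (0,1)`,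
positive diagonal scalings `D, W`, with `‖Q − Q̄‖₂ ≤ t`, `max_i |√(d_i/w_i) − 1| ≤ δ`
and `max_i |√(w_i/d_i) − 1| ≤ δ`, the ℓ¹ distance between
`(1−α)D^{1/2}(I−αQ)^{-1}D^{-1/2}v` and `(1−α)W^{1/2}(I−αQ̄)^{-1}W^{-1/2}v`
is at most `√n·‖v‖₂·√(w_max/w_min)·(t/(1−α) + 2δ + δ²)`. -/
theorem pagerank_sbm_l1_error_bound
    (n : ℕ) [NeZero n]
    (Q Qbar : Matrix (Fin n) (Fin n) ℝ)
    (hQsymm : Q.IsSymm) (hQbarSymm : Qbar.IsSymm)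
    (hQ1 : sNorm Q ≤ 1) (hQbar1 : sNorm Qbar ≤ 1)
    (α : ℝ) (hα : α ∈ Set.Ioo (0 : ℝ) 1)
    (d w : Fin n → ℝ) (hd : ∀ i, 0 < d i) (hw : ∀ i, 0 < w i)
    (v : Fin n → ℝ)
    (t δ : ℝ) (ht : 0 ≤ t) (hδ : 0 ≤ δ)
    (hQQbar : sNorm (Q - Qbar) ≤ t)
    (hδ₁ : ∀ i, |Real.sqrt (d i / w i) - 1| ≤ δ)
    (hδ₂ : ∀ i, |Real.sqrt (w i / d i) - 1| ≤ δ) :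
    ∑ i, |((1 - α) • ((Matrix.diagonal (fun i => Real.sqrt (d i)) * (1 - α • Q)⁻¹ *
            Matrix.diagonal (fun i => (Real.sqrt (d i))⁻¹)) *ᵥ v) -
          (1 - α) • ((Matrix.diagonal (fun i => Real.sqrt (w i)) * (1 - α • Qbar)⁻¹ *
            Matrix.diagonal (fun i => (Real.sqrt (w i))⁻¹)) *ᵥ v)) i| ≤
      Real.sqrt n * vNorm2 v *
        Real.sqrt (univ.sup' univ_nonempty w / univ.inf' univ_nonempty w) *
        (t / (1 - α) + 2 * δ + δ ^ 2) :=
  pagerank_sbm_l1_error_bound_general n Q Qbar hQ1 hQbar1 α hα d w hw v t δ hQQbar hδ₁ hδ₂
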